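/- arXiv:2104.12222 — 3 statements merged into one kernel-verified Lean document; each statement's English description precedes it below -/
import Mathlib

section
/- (Positive bias of the LR estimator in a homogeneous market.) Let λ > 0 and 0 ≤ φ < φ̃. For any a ∈ (0,1), define the limiting LR estimator value E_LR(a) = exp(−λ·φ·F(a·φ̃ + (1−a)·φ)) − exp(−λ·φ̃·F(a·φ̃ + (1−a)·φ)) and the limiting GTE = exp(−λ·φ·F(φ)) − exp(−λ·φ̃·F(φ̃)). Then E_LR(a) > GTE for all a ∈ (0,1). -/
/-!
`F x` is minus the secant slope of the strictly convex function `exp (-·)` between `0` and `x`,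
so `F` is strictly decreasing on `[0, ∞)`. The mixed rate `m = a φ̃ + (1 - a) φ` lies strictly
between `φ` and `φ̃`, hence `F m ≤ F φ` and `F φ̃ < F m`: replacing `F φ` by `F m` can only raise
the control term, and replacing `F φ̃` by `F m` strictly lowers the treatment term.
-/

noncomputable def F : ℝ → ℝ := fun x => if x = 0 then 1 else (1 - Real.exp (-x)) / x

open Real Set

lemma strictConvexOn_exp_neg : StrictConvexOn ℝ univ fun x : ℝ => exp (-x) := by
  refine ⟨convex_univ, fun x _ y _ hxy a b ha hb hab => ?_⟩
  have := strictConvexOn_exp.2 (mem_univ (-x)) (mem_univ (-y)) (neg_injective.ne hxy) ha hb hab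
  simpa only [smul_eq_mul, mul_neg, neg_add] using this

lemma F_of_ne_zero {x : ℝ} (hx : x ≠ 0) : F x = (1 - exp (-x)) / x := if_neg hx

lemma F_lt_one {x : ℝ} (hx : 0 < x) : F x < 1 := by
  rw [F_of_ne_zero hx.ne', div_lt_one hx]
  linarith [add_one_lt_exp (neg_ne_zero.2 hx.ne')]

lemma F_eq_neg_slope {x : ℝ} (hx : x ≠ 0) : F x = -((exp (-x) - exp (-0)) / (x - 0)) := by
  rw [F_of_ne_zero hx, neg_zero, exp_zero, sub_zero, ← neg_div, neg_sub]

lemma strictAntiOn_F : StrictAntiOn F (Ici 0) := by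
  intro x hx y hy hxy
  rcases (mem_Ici.1 hx).eq_or_lt with rfl | hx0
  · simpa [F] using F_lt_one hxy
  rw [F_eq_neg_slope hx0.ne', F_eq_neg_slope (hx0.trans hxy).ne', neg_lt_neg_iff]
  exact strictConvexOn_exp_neg.secant_strict_mono (mem_univ 0) (mem_univ x) (mem_univ y)
    hx0.ne' (hx0.trans hxy).ne' hxy

theorem stmt_5 (lam φ φt : ℝ) (hlam : 0 < lam) (hφ : 0 ≤ φ) (hlt : φ < φt)
    (a : ℝ) (ha : a ∈ Set.Ioo (0:ℝ) 1) :
    Real.exp (-(lam * φ * F φ)) - Real.exp (-(lam * φt * F φt))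
      < Real.exp (-(lam * φ * F (a * φt + (1 - a) * φ)))
        - Real.exp (-(lam * φt * F (a * φt + (1 - a) * φ))) := by
  obtain ⟨ha0, ha1⟩ := ha
  set m := a * φt + (1 - a) * φ
  have hφm : φ < m := by nlinarith
  have hmφt : m < φt := by nlinarith
  have hm : m ∈ Ici (0 : ℝ) := mem_Ici.2 (hφ.trans hφm.le)
  have hφt : 0 < φt := hφ.trans_lt hlt
  have hF_le : F m ≤ F φ := strictAntiOn_F.antitoneOn hφ hm hφm.le
  have hF_lt : F φt < F m := strictAntiOn_F hm (mem_Ici.2 hφt.le) hmφt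
  have h_control : exp (-(lam * φ * F φ)) ≤ exp (-(lam * φ * F m)) := by gcongr
  have h_treatment : exp (-(lam * φt * F m)) < exp (-(lam * φt * F φt)) := by gcongr
  linarith
end

section
/- (Monotonicity of CR bias in the treatment allocation.) Let λ > 0 and 0 < φ < φ̃, with ψ = φ·F(φ) and ψ̃ = φ̃·F(φ̃). Define B_CR(a) = λ·(ψ̃ − ψ)·F(λ·(a·ψ̃ + (1−a)·ψ)) − GTE where GTE = λ·(ψ̃·F(λψ̃) − ψ·F(λψ)) is constant in a. Then B_CR is positive and strictly decreasing on (0,1). -/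
/-!
Write `g t = 1 - exp (-t)`. Then `x * F x = g x` for every `x`, so `F x` is the slope of the
secant of the strictly concave function `g` over `[0, x]`. With `u₀ = λψ < U = λψ̃` and
`u = λ (a ψ̃ + (1 - a) ψ) ∈ (u₀, U)`, the bias is `B_CR(a) = (U - u₀) (F u - slope g u₀ U)`.
Concavity gives `slope g u₀ U < slope g 0 U = F U < F u`, so `B_CR > 0`, and `B_CR` decreases
because `u` increases with `a` while `F` is strictly decreasing on `(0, ∞)`.
-/

open Real Set

lemma mul_F (x : ℝ) : x * F x = 1 - exp (-x) := by
  unfold F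
  split_ifs with hx
  · simp [hx]
  · field_simp

lemma strictConcaveOn_one_sub_exp_neg : StrictConcaveOn ℝ univ fun t : ℝ => 1 - exp (-t) := by
  refine ⟨convex_univ, fun x _ y _ hxy a b ha hb hab => ?_⟩
  have h := strictConvexOn_exp.2 (mem_univ (-x)) (mem_univ (-y)) (neg_inj.not.2 hxy) ha hb hab
  simp only [smul_eq_mul] at h ⊢
  rw [show a * -x + b * -y = -(a * x + b * y) by ring] at h
  linarith

lemma F_eq_secant {x : ℝ} (hx : x ≠ 0) :
    F x = ((1 - exp (-x)) - (1 - exp (-0))) / (x - 0) := by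
  rw [← mul_F, neg_zero, exp_zero, sub_self, sub_zero, sub_zero, mul_div_cancel_left₀ _ hx]

lemma F_strictAntiOn : StrictAntiOn F (Ioi 0) := fun x hx y hy hxy => by
  rw [F_eq_secant (ne_of_gt hx), F_eq_secant (ne_of_gt hy)]
  exact strictConcaveOn_one_sub_exp_neg.secant_strict_mono (mem_univ 0) (mem_univ x)
    (mem_univ y) (ne_of_gt hx) (ne_of_gt hy) hxy

lemma mul_F_sub_mul_F_lt_sub_mul_F {x y z : ℝ} (hx : 0 < x) (hxy : x < y) (hyz : y < z) :
    z * F z - x * F x < (z - x) * F y := by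
  have hz : 0 < z := hx.trans (hxy.trans hyz)
  have h_secant : (z * F z - x * F x) / (z - x) < F z := by
    have h := strictConcaveOn_one_sub_exp_neg.secant_strict_mono (mem_univ z) (mem_univ 0)
      (mem_univ x) (ne_of_lt hz) (ne_of_lt (hxy.trans hyz)) hx
    rw [← neg_div_neg_eq, ← neg_div_neg_eq (_ - _) (0 - z)] at h
    simp only [neg_sub] at h
    rwa [mul_F, mul_F, F_eq_secant (ne_of_gt hz)]
  have hFzy : F z < F y := F_strictAntiOn (hx.trans hxy) hz hyz
  rw [← div_lt_iff₀' (sub_pos.2 (hxy.trans hyz))]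
  exact h_secant.trans hFzy

lemma secant_gap_pos {x z a : ℝ} (hx : 0 < x) (hxz : x < z) (ha : a ∈ Ioo (0:ℝ) 1) :
    0 < (z - x) * F (a * z + (1 - a) * x) - (z * F z - x * F x) := by
  obtain ⟨ha0, ha1⟩ := ha
  exact sub_pos.2 (mul_F_sub_mul_F_lt_sub_mul_F hx (by nlinarith) (by nlinarith))

lemma secant_gap_strictAntiOn {x z : ℝ} (hx : 0 < x) (hxz : x < z) :
    StrictAntiOn (fun a => (z - x) * F (a * z + (1 - a) * x) - (z * F z - x * F x)) (Ici 0) := by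
  intro a ha b hb hab
  have hpos : ∀ c ∈ Ici (0:ℝ), 0 < c * z + (1 - c) * x := fun c (hc : 0 ≤ c) => by nlinarith
  have hF := F_strictAntiOn (hpos a ha) (hpos b hb) (by nlinarith)
  exact sub_lt_sub_right (mul_lt_mul_of_pos_left hF (sub_pos.2 hxz)) _

theorem stmt_7 (lam φ φt : ℝ) (hlam : 0 < lam) (hφ : 0 < φ) (hlt : φ < φt) :
    (∀ a ∈ Set.Ioo (0:ℝ) 1,
      0 < lam * (φt * F φt - φ * F φ)
            * F (lam * (a * (φt * F φt) + (1 - a) * (φ * F φ)))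
          - lam * (φt * F φt * F (lam * (φt * F φt)) - φ * F φ * F (lam * (φ * F φ)))) ∧
    StrictAntiOn (fun a : ℝ =>
      lam * (φt * F φt - φ * F φ)
          * F (lam * (a * (φt * F φt) + (1 - a) * (φ * F φ)))
        - lam * (φt * F φt * F (lam * (φt * F φt)) - φ * F φ * F (lam * (φ * F φ))))
      (Set.Ioo (0:ℝ) 1) := by
  set ψ := φ * F φ
  set ψt := φt * F φt
  have hψ : 0 < ψ := by
    simp only [ψ, mul_F, sub_pos, exp_lt_one_iff, neg_lt_zero, hφ]
  have hψψt : ψ < ψt := by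
    simpa only [ψ, ψt, mul_F, sub_lt_sub_iff_left, exp_lt_exp, neg_lt_neg_iff]
  have hB : ∀ a, lam * (ψt - ψ) * F (lam * (a * ψt + (1 - a) * ψ))
      - lam * (ψt * F (lam * ψt) - ψ * F (lam * ψ))
      = (lam * ψt - lam * ψ) * F (a * (lam * ψt) + (1 - a) * (lam * ψ))
      - (lam * ψt * F (lam * ψt) - lam * ψ * F (lam * ψ)) := fun a => by
    rw [show lam * (a * ψt + (1 - a) * ψ) = a * (lam * ψt) + (1 - a) * (lam * ψ) by ring]
    ring
  have hlamψ : 0 < lam * ψ := mul_pos hlam hψ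
  have hlamψψt : lam * ψ < lam * ψt := mul_lt_mul_of_pos_left hψψt hlam
  simp only [hB]
  exact ⟨fun a ha => secant_gap_pos hlamψ hlamψψt ha,
    (secant_gap_strictAntiOn hlamψ hlamψψt).mono (Ioo_subset_Ioi_self.trans Ioi_subset_Ici_self)⟩
end

section
/- For any real constants a ≥ 0 and b, the sequence N·((1 − a/N + b/N²)^N − (1 − a/N)^N) converges to b·exp(−a) as N → ∞. -/
/-!
With `p = 1 - a/N + b/N²` and `q = 1 - a/N` we have `p ^ N - q ^ N = (p - q) S` with
`S = ∑_{i<N} p^i q^(N-1-i)` and `p - q = b/N²`, so the sequence equals `b · S/N`. The average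
`S/N` lies between `min p q ^ (N-1)` and `max p q ^ (N-1)`; both `min p q` and `max p q` are
`1 - a/N + o(1/N)`, so by `(1 + t/N + o(1/N)) ^ N → exp t` both bounds tend to `exp (-a)`.
-/

open Filter Finset Real Topology

section GeomSum

variable {R : Type*} [CommRing R] [LinearOrder R] [IsStrictOrderedRing R]

theorem nsmul_min_pow_le_geom_sum₂ {x y : R} (hx : 0 ≤ x) (hy : 0 ≤ y) (n : ℕ) :
    n • min x y ^ (n - 1) ≤ ∑ i ∈ range n, x ^ i * y ^ (n - 1 - i) := by
  simpa using card_nsmul_le_sum (range n) (fun i => x ^ i * y ^ (n - 1 - i)) _ fun i hi => by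
    have hin : i + (n - 1 - i) = n - 1 := by have := mem_range.1 hi; omega
    calc min x y ^ (n - 1) = min x y ^ i * min x y ^ (n - 1 - i) := by rw [← pow_add, hin]
      _ ≤ x ^ i * y ^ (n - 1 - i) := by
        gcongr
        exacts [min_le_left x y, min_le_right x y]

theorem geom_sum₂_le_nsmul_max_pow {x y : R} (hx : 0 ≤ x) (hy : 0 ≤ y) (n : ℕ) :
    ∑ i ∈ range n, x ^ i * y ^ (n - 1 - i) ≤ n • max x y ^ (n - 1) := by
  simpa using sum_le_card_nsmul (range n) (fun i => x ^ i * y ^ (n - 1 - i)) _ fun i hi => by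
    have hin : i + (n - 1 - i) = n - 1 := by have := mem_range.1 hi; omega
    calc x ^ i * y ^ (n - 1 - i) ≤ max x y ^ i * max x y ^ (n - 1 - i) := by
          gcongr
          exacts [le_max_left x y, le_max_right x y]
      _ = max x y ^ (n - 1) := by rw [← pow_add, hin]

end GeomSum

theorem tendsto_of_tendsto_nat_mul_sub {x : ℕ → ℝ} {c t : ℝ}
    (hx : Tendsto (fun n : ℕ => n * (x n - c)) atTop (𝓝 t)) :
    Tendsto x atTop (𝓝 c) := by
  have h := hx.div_atTop tendsto_natCast_atTop_atTop
  rw [← tendsto_sub_nhds_zero_iff]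
  refine h.congr' ?_
  filter_upwards [eventually_ne_atTop 0] with n hn
  field_simp

theorem tendsto_pow_pred_exp_of_tendsto_nat_mul_sub_one {x : ℕ → ℝ} {t : ℝ}
    (hx : Tendsto (fun n : ℕ => n * (x n - 1)) atTop (𝓝 t)) :
    Tendsto (fun n => x n ^ (n - 1)) atTop (𝓝 (exp t)) := by
  have hx1 := tendsto_of_tendsto_nat_mul_sub hx
  have hpow : Tendsto (fun n => x n ^ n) atTop (𝓝 (exp t)) := by
    simpa using Real.tendsto_one_add_pow_exp_of_tendsto hx
  have h := hpow.div hx1 one_ne_zero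
  rw [div_one] at h
  refine h.congr' ?_
  filter_upwards [eventually_ne_atTop 0, hx1.eventually_ne one_ne_zero] with n hn hxn
  rw [Pi.div_apply, div_eq_iff hxn, ← pow_succ, Nat.sub_add_cancel (Nat.one_le_iff_ne_zero.2 hn)]

theorem tendsto_geom_sum₂_div_exp_of_tendsto_nat_mul_sub_one {x y : ℕ → ℝ} {t : ℝ}
    (hx : Tendsto (fun n : ℕ => n * (x n - 1)) atTop (𝓝 t))
    (hy : Tendsto (fun n : ℕ => n * (y n - 1)) atTop (𝓝 t)) :
    Tendsto (fun n => (∑ i ∈ range n, x n ^ i * y n ^ (n - 1 - i)) / n) atTop (𝓝 (exp t)) := by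
  have hmin : Tendsto (fun n => min (x n) (y n) ^ (n - 1)) atTop (𝓝 (exp t)) := by
    refine tendsto_pow_pred_exp_of_tendsto_nat_mul_sub_one ?_
    simpa only [← min_sub_sub_right, ← mul_min_of_nonneg _ _ (Nat.cast_nonneg _), min_self]
      using hx.min hy
  have hmax : Tendsto (fun n => max (x n) (y n) ^ (n - 1)) atTop (𝓝 (exp t)) := by
    refine tendsto_pow_pred_exp_of_tendsto_nat_mul_sub_one ?_
    simpa only [← max_sub_sub_right, ← mul_max_of_nonneg _ _ (Nat.cast_nonneg _), max_self]
      using hx.max hy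
  have hpos : ∀ᶠ n in atTop, 0 < x n ∧ 0 < y n :=
    ((tendsto_of_tendsto_nat_mul_sub hx).eventually_const_lt one_pos).and
      ((tendsto_of_tendsto_nat_mul_sub hy).eventually_const_lt one_pos)
  refine tendsto_of_tendsto_of_tendsto_of_le_of_le' hmin hmax ?_ ?_
  · filter_upwards [hpos, eventually_gt_atTop 0] with n ⟨hxn, hyn⟩ hn
    rw [le_div_iff₀ (by positivity), mul_comm, ← nsmul_eq_mul]
    exact nsmul_min_pow_le_geom_sum₂ hxn.le hyn.le n
  · filter_upwards [hpos, eventually_gt_atTop 0] with n ⟨hxn, hyn⟩ hn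
    rw [div_le_iff₀ (by positivity), mul_comm, ← nsmul_eq_mul]
    exact geom_sum₂_le_nsmul_max_pow hxn.le hyn.le n

theorem stmt_18_general (a b : ℝ) :
    Filter.Tendsto (fun N : ℕ =>
        (N : ℝ) * ((1 - a / N + b / (N : ℝ) ^ 2) ^ N - (1 - a / N) ^ N))
      Filter.atTop (nhds (b * Real.exp (-a))) := by
  have hp : Tendsto (fun N : ℕ => N * ((1 - a / N + b / (N : ℝ) ^ 2) - 1)) atTop (𝓝 (-a)) := by
    have h := (tendsto_const_div_atTop_nhds_zero_nat b).const_add (-a)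
    rw [add_zero] at h
    refine h.congr' ?_
    filter_upwards [eventually_ne_atTop 0] with N hN
    field_simp
    ring
  have hq : Tendsto (fun N : ℕ => N * ((1 - a / N) - 1)) atTop (𝓝 (-a)) := by
    refine tendsto_const_nhds.congr' ?_
    filter_upwards [eventually_ne_atTop 0] with N hN
    field_simp
    ring
  refine ((tendsto_geom_sum₂_div_exp_of_tendsto_nat_mul_sub_one hp hq).const_mul b).congr' ?_
  filter_upwards [eventually_ne_atTop 0] with N hN
  rw [← geom_sum₂_mul]
  field_simp
  ring

theorem stmt_18 (a b : ℝ) (ha : 0 ≤ a) :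
    Filter.Tendsto (fun N : ℕ =>
        (N : ℝ) * ((1 - a / N + b / (N : ℝ) ^ 2) ^ N - (1 - a / N) ^ N))
      Filter.atTop (nhds (b * Real.exp (-a))) :=
  stmt_18_general a b
end
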